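/- arXiv:2012.08498 — 2 statements merged into one kernel-verified Lean document; each statement's English description precedes it below -/
import Mathlib

section
/- Let n ≥ 2 and let λ_1, λ_2, …, λ_n be pairwise distinct positive real numbers, and set ℓ_j = ∏_{i=1, i≠j}^n λ_i/(λ_i − λ_j) for j = 1,…,n. Then for every integer k with 1 ≤ k ≤ n − 1, ∑_{j=1}^n ℓ_j/λ_j^k ≥ ∑_{j=1}^n 1/λ_j^k, with equality if and only if k = 1. -/
/-!
Put `xⱼ = λⱼ⁻¹`. Then `ℓⱼ / λⱼ^k = xⱼ^(n-1+k) / ∏_{i ≠ j} (xⱼ - xᵢ)`, so the left-hand side is the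
divided difference of `t ↦ t^(n-1+k)` at the nodes `xⱼ`. This divided difference is the complete
homogeneous symmetric polynomial `h_k(x)`: both sides satisfy `f_s(d+1) = xₐ f_s(d) + f_{s∖a}(d+1)`,
and at `d = 0` the divided difference is the leading coefficient `1` of `t^(n-1)` (Lagrange
interpolation). The right-hand side is the power sum `p_k(x)`. For positive `x`, `h_k` is a sum of
positive monomials containing every `xⱼ^k`, and for `k ≥ 2`, `n ≥ 2` also a mixed one such as
`x₁^(k-1) x₂`.
-/

open Finset

section DividedDifference

variable {ι F : Type*} [DecidableEq ι] [Field F] {x : ι → F} {s : Finset ι} {a : ι}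

def powDivDiff (x : ι → F) (s : Finset ι) (m : ℕ) : F :=
  ∑ j ∈ s, x j ^ m / ∏ i ∈ s.erase j, (x j - x i)

@[simp]
lemma powDivDiff_empty (x : ι → F) (m : ℕ) : powDivDiff x ∅ m = 0 := sum_empty

lemma powDivDiff_card_sub_one (hx : Set.InjOn x s) (hs : s.Nonempty) :
    powDivDiff x s (#s - 1) = 1 := by
  have hdeg : (Polynomial.X ^ (#s - 1) : Polynomial F).degree < #s := by
    rw [Polynomial.degree_X_pow]
    exact_mod_cast Nat.sub_lt hs.card_pos one_pos
  simpa [powDivDiff] using (Lagrange.coeff_eq_sum hx hdeg).symm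

lemma powDivDiff_succ (hx : Set.InjOn x s) (ha : a ∈ s) (m : ℕ) :
    powDivDiff x s (m + 1) = x a * powDivDiff x s m + powDivDiff x (s.erase a) m := by
  have hterm : ∀ j ∈ s.erase a, x j ^ (m + 1) / ∏ i ∈ s.erase j, (x j - x i) -
      x a * (x j ^ m / ∏ i ∈ s.erase j, (x j - x i)) =
        x j ^ m / ∏ i ∈ (s.erase a).erase j, (x j - x i) := by
    intro j hj
    obtain ⟨hja, hjs⟩ := mem_erase.1 hj
    have hsub : x j - x a ≠ 0 := sub_ne_zero.2 fun h => hja (hx hjs ha h)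
    rw [← mul_prod_erase _ _ (mem_erase.2 ⟨Ne.symm hja, ha⟩), erase_right_comm, mul_div_assoc',
      ← sub_div, pow_succ', ← sub_mul, mul_div_mul_left _ _ hsub]
  rw [powDivDiff, powDivDiff, powDivDiff, mul_sum, ← sub_eq_iff_eq_add', ← sum_sub_distrib,
    ← sum_erase_add _ _ ha, ← sum_congr rfl hterm]
  simp [pow_succ', mul_div_assoc]

end DividedDifference

section CompleteHomogeneous

variable {ι R : Type*} [DecidableEq ι] [CommSemiring R] {x : ι → R} {s : Finset ι} {a : ι}

def completeHomog (x : ι → R) (s : Finset ι) (d : ℕ) : R :=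
  ∑ c ∈ s.piAntidiag d, ∏ i ∈ s, x i ^ c i

@[simp]
lemma completeHomog_zero (x : ι → R) (s : Finset ι) : completeHomog x s 0 = 1 := by
  simp [completeHomog]

@[simp]
lemma completeHomog_empty_succ (x : ι → R) (d : ℕ) : completeHomog x ∅ (d + 1) = 0 := by
  simp [completeHomog]

lemma completeHomog_cons (x : ι → R) (ha : a ∉ s) (d : ℕ) :
    completeHomog x (cons a s ha) d =
      ∑ p ∈ antidiagonal d, x a ^ p.1 * completeHomog x s p.2 := by
  rw [completeHomog, piAntidiag_cons ha, sum_disjiUnion]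
  refine sum_congr rfl fun p _ => ?_
  rw [sum_map, completeHomog, mul_sum]
  refine sum_congr rfl fun c hc => ?_
  have hca : c a = 0 := by_contra fun h => ha ((mem_piAntidiag.1 hc).2 a h)
  have hrest : ∀ i ∈ s, x i ^ (c i + if i = a then p.1 else 0) = x i ^ c i := fun i hi => by
    rw [if_neg (ne_of_mem_of_not_mem hi ha), add_zero]
  simp only [addRightEmbedding_apply, Pi.add_apply, prod_cons, prod_congr rfl hrest, hca,
    ↓reduceIte, zero_add]

lemma completeHomog_succ (x : ι → R) (ha : a ∈ s) (d : ℕ) :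
    completeHomog x s (d + 1) =
      x a * completeHomog x s d + completeHomog x (s.erase a) (d + 1) := by
  obtain ⟨t, hat, rfl⟩ : ∃ t, ∃ hat : a ∉ t, s = cons a t hat :=
    ⟨s.erase a, notMem_erase a s, by rw [cons_eq_insert, insert_erase ha]⟩
  rw [completeHomog_cons, completeHomog_cons, Nat.sum_antidiagonal_succ, erase_cons, pow_zero,
    one_mul, add_comm, mul_sum]
  exact congrArg (· + _) (sum_congr rfl fun _ _ => by ring)

lemma completeHomog_one (x : ι → R) (s : Finset ι) : completeHomog x s 1 = ∑ i ∈ s, x i := by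
  induction s using cons_induction with
  | empty => simp
  | cons a s ha ih =>
    rw [completeHomog_succ x (mem_cons_self a s), erase_cons, ih, sum_cons, completeHomog_zero,
      mul_one]

end CompleteHomogeneous

theorem powDivDiff_eq_completeHomog {ι F : Type*} [DecidableEq ι] [Field F] {x : ι → F}
    {s : Finset ι} (hx : Set.InjOn x s) (hs : s.Nonempty) (d : ℕ) :
    powDivDiff x s (#s - 1 + d) = completeHomog x s d := by
  induction s using strongInduction generalizing d with
  | H s ih =>
    induction d with
    | zero => simpa using powDivDiff_card_sub_one hx hs
    | succ d ihd =>
      obtain ⟨a, ha⟩ := hs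
      have hxa : Set.InjOn x (s.erase a) := hx.mono (erase_subset a s)
      rw [← add_assoc, powDivDiff_succ hx ha, ihd, completeHomog_succ x ha]
      congr 1
      rcases (s.erase a).eq_empty_or_nonempty with he | hne
      · simp [he]
      · have hcard : #s - 1 + d = #(s.erase a) - 1 + (d + 1) := by
          have := hne.card_pos
          rw [card_erase_of_mem ha] at this ⊢
          omega
        rw [hcard, ih _ (erase_ssubset ha) hxa hne]

section Order

variable {ι R : Type*} [DecidableEq ι] [CommSemiring R] [PartialOrder R] {x : ι → R}
  {s : Finset ι} {a : ι}

lemma completeHomog_nonneg [IsOrderedRing R] (hx : ∀ i ∈ s, 0 ≤ x i) (d : ℕ) :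
    0 ≤ completeHomog x s d :=
  sum_nonneg fun _ _ => prod_nonneg fun i hi => pow_nonneg (hx i hi) _

lemma pow_le_completeHomog [IsOrderedRing R] (hx : ∀ i ∈ s, 0 ≤ x i) (ha : a ∈ s) (d : ℕ) :
    x a ^ d ≤ completeHomog x s d := by
  induction d with
  | zero => simp
  | succ d ih =>
    rw [completeHomog_succ x ha, pow_succ']
    exact le_add_of_le_of_nonneg (mul_le_mul_of_nonneg_left ih (hx a ha))
      (completeHomog_nonneg (fun i hi => hx i (mem_of_mem_erase hi)) _)

lemma sum_pow_le_completeHomog [IsOrderedRing R] (hx : ∀ i ∈ s, 0 ≤ x i) {d : ℕ} (hd : d ≠ 0) :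
    ∑ i ∈ s, x i ^ d ≤ completeHomog x s d := by
  obtain ⟨d, rfl⟩ := Nat.exists_eq_succ_of_ne_zero hd
  induction s using cons_induction with
  | empty => simp
  | cons a s ha ih =>
    have hxs : ∀ i ∈ s, 0 ≤ x i := fun i hi => hx i (mem_cons_of_mem hi)
    have has : a ∈ cons a s ha := mem_cons_self a s
    rw [completeHomog_succ x has, erase_cons, sum_cons, pow_succ']
    exact add_le_add (mul_le_mul_of_nonneg_left (pow_le_completeHomog hx has d) (hx a has)) (ih hxs)

lemma pow_lt_completeHomog [IsStrictOrderedRing R] (hx : ∀ i ∈ s, 0 < x i) (ha : a ∈ s)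
    (hs : 1 < #s) (d : ℕ) : x a ^ (d + 1) < completeHomog x s (d + 1) := by
  have hx' : ∀ i ∈ s, 0 ≤ x i := fun i hi => (hx i hi).le
  obtain ⟨b, hb⟩ : (s.erase a).Nonempty := by
    rw [← card_pos, card_erase_of_mem ha]; omega
  rw [completeHomog_succ x ha, pow_succ']
  exact lt_add_of_le_of_pos (mul_le_mul_of_nonneg_left (pow_le_completeHomog hx' ha d) (hx' a ha))
    ((pow_pos (hx b (mem_of_mem_erase hb)) (d + 1)).trans_le
      (pow_le_completeHomog (fun i hi => hx' i (mem_of_mem_erase hi)) hb _))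

lemma sum_pow_lt_completeHomog [IsStrictOrderedRing R] (hx : ∀ i ∈ s, 0 < x i) (hs : 1 < #s)
    {d : ℕ} (hd : 2 ≤ d) : ∑ i ∈ s, x i ^ d < completeHomog x s d := by
  obtain ⟨d, rfl⟩ := Nat.exists_eq_add_of_le' hd
  obtain ⟨a, ha⟩ := card_pos.1 (zero_lt_one.trans hs)
  rw [completeHomog_succ x ha, ← add_sum_erase _ _ ha, pow_succ']
  exact add_lt_add_of_lt_of_le (mul_lt_mul_of_pos_left (pow_lt_completeHomog hx ha hs d) (hx a ha))
    (sum_pow_le_completeHomog (fun i hi => (hx i (mem_of_mem_erase hi)).le) (by omega))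

end Order

lemma div_sub_eq_inv_div_inv_sub {F : Type*} [Field F] {a b : F} (ha : a ≠ 0) (hb : b ≠ 0) :
    a / (a - b) = b⁻¹ / (b⁻¹ - a⁻¹) := by
  rw [inv_sub_inv hb ha, div_div_eq_mul_div, inv_mul_eq_div, mul_div_cancel_left₀ _ hb]

lemma prod_div_sub_div_pow {ι F : Type*} [DecidableEq ι] [Field F] {l : ι → F} {s : Finset ι}
    {j : ι} (hl : ∀ i ∈ s, l i ≠ 0) (hj : j ∈ s) (k : ℕ) :
    (∏ i ∈ s.erase j, l i / (l i - l j)) / l j ^ k =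
      (l j)⁻¹ ^ (#s - 1 + k) / ∏ i ∈ s.erase j, ((l j)⁻¹ - (l i)⁻¹) := by
  rw [prod_congr rfl fun i hi => div_sub_eq_inv_div_inv_sub (hl i (mem_of_mem_erase hi)) (hl j hj),
    prod_div_distrib, prod_const, card_erase_of_mem hj, pow_add, inv_pow (l j) k]
  ring

theorem sum_lagrange_weights_inv_pow_ge_general
    (n : ℕ) (hn : 2 ≤ n) (l : Fin n → ℝ) (hpos : ∀ i, 0 < l i)
    (hdist : ∀ i j, i ≠ j → l i ≠ l j)
    (k : ℕ) (hk1 : 1 ≤ k) :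
    (∑ j, (∏ i ∈ univ.erase j, l i / (l i - l j)) / l j ^ k ≥ ∑ j, 1 / l j ^ k) ∧
      ((∑ j, (∏ i ∈ univ.erase j, l i / (l i - l j)) / l j ^ k = ∑ j, 1 / l j ^ k) ↔ k = 1) := by
  set x : Fin n → ℝ := fun i => (l i)⁻¹
  have hx : ∀ i ∈ univ, 0 < x i := fun i _ => inv_pos.2 (hpos i)
  have hinj : Set.InjOn x (univ : Finset (Fin n)) := fun i _ j _ h =>
    by_contra fun hij => hdist i j hij (inv_injective h)
  have hcard : #(univ : Finset (Fin n)) = n := card_fin n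
  have hlhs :
      ∑ j, (∏ i ∈ univ.erase j, l i / (l i - l j)) / l j ^ k = completeHomog x univ k := by
    rw [← powDivDiff_eq_completeHomog hinj (card_pos.1 (by omega)) k]
    exact sum_congr rfl fun j hj => prod_div_sub_div_pow (fun i _ => (hpos i).ne') hj k
  have hrhs : ∑ j, 1 / l j ^ k = ∑ j, x j ^ k := by simp [x, inv_pow]
  rw [hlhs, hrhs]
  refine ⟨sum_pow_le_completeHomog (fun i hi => (hx i hi).le) (by omega), fun heq => ?_, ?_⟩
  · by_contra hk
    exact (sum_pow_lt_completeHomog hx (by omega) (by omega)).ne heq.symm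
  · rintro rfl
    simp [completeHomog_one]

/-- **Lemma 2(iii)**. For pairwise distinct positive reals `λ₁, …, λₙ` (`n ≥ 2`) with Lagrange
weights `ℓⱼ = ∏_{i ≠ j} λᵢ/(λᵢ - λⱼ)`, for every integer `k` with `1 ≤ k ≤ n - 1` one has
`∑_{j=1}^n ℓⱼ/λⱼᵏ ≥ ∑_{j=1}^n 1/λⱼᵏ`, with equality if and only if `k = 1`. -/
theorem sum_lagrange_weights_inv_pow_ge
    (n : ℕ) (hn : 2 ≤ n) (l : Fin n → ℝ) (hpos : ∀ i, 0 < l i)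
    (hdist : ∀ i j, i ≠ j → l i ≠ l j)
    (k : ℕ) (hk1 : 1 ≤ k) (hk2 : k ≤ n - 1) :
    (∑ j, (∏ i ∈ univ.erase j, l i / (l i - l j)) / l j ^ k ≥ ∑ j, 1 / l j ^ k) ∧
      ((∑ j, (∏ i ∈ univ.erase j, l i / (l i - l j)) / l j ^ k = ∑ j, 1 / l j ^ k) ↔ k = 1) :=
  sum_lagrange_weights_inv_pow_ge_general n hn l hpos hdist k hk1
end

section
/- Let n ≥ 2 and let μ_1 > μ_2 > … > μ_n > 0 be pairwise distinct positive real numbers with Lagrange weights ℓ_j = ∏_{i=1, i≠j}^n μ_j/(μ_j − μ_i). Let ψ(t) = ∑_{k=0}^∞ a_k t^k be a power series convergent in a neighborhood of t = 0 with a_0 = 1 and a_1 > 0. If the identity 1 = ∑_{j=1}^n ℓ_j ∏_{i=1, i≠j}^n ψ(μ_i t) holds for all t in a neighborhood of 0, then a_k = 0 for all k ≥ 2; that is, ψ(t) = 1 + a_1 t. -/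
/-!
Evaluating Lagrange's identity `∑ⱼ basisⱼ = 1` for the nodes `μᵢ⁻¹` gives
`∑ⱼ ℓⱼ ∏_{i ≠ j} (1 - μᵢ x) = 1`, so every affine `ψ` solves the equation. Conversely, if
`a₂ = ⋯ = a_{k-1} = 0`, then `ψ s = 1 + a₁ s + a_k s^k + O(s^{k+1})`; expanding the products to
order `t^k` and cancelling the affine part with the identity above, the `t^k`-coefficient of the
equation reads `a_k ∑ⱼ ℓⱼ ∑_{i ≠ j} μᵢ^k = 0`. Since `∑ⱼ ℓⱼ = 1` and, by partial fractions of
`∏ᵢ (1 - μᵢ x)⁻¹`, `∑ⱼ ℓⱼ μⱼ^k = h_k(μ)` is the complete homogeneous symmetric polynomial, that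
sum equals `p_k(μ) - h_k(μ) < 0` for `k ≥ 2`, whence `a_k = 0`.
-/

open Finset Filter Topology Asymptotics Polynomial

section Lagrange

variable {ι K : Type*} [Fintype ι] [DecidableEq ι] [Field K]

def lagrangeWeight (μ : ι → K) (j : ι) : K :=
  ∏ i ∈ univ.erase j, μ j / (μ j - μ i)

-- `C ℓⱼ * ∏_{i ≠ j} (1 - C μᵢ * X)` is the Lagrange basis polynomial of `j` for the nodes `μᵢ⁻¹`.
theorem sum_C_lagrangeWeight_mul_prod_erase_one_sub [Nonempty ι] {μ : ι → K}
    (hμ : Function.Injective μ) (hμ0 : ∀ i, μ i ≠ 0) :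
    ∑ j, C (lagrangeWeight μ j) * ∏ i ∈ univ.erase j, (1 - C (μ i) * X) = 1 := by
  have hinj : Set.InjOn (fun i => (μ i)⁻¹) (univ : Finset ι) :=
    fun i _ j _ h => hμ (inv_injective h)
  conv_rhs => rw [← Lagrange.sum_basis hinj univ_nonempty]
  refine sum_congr rfl fun j _ => ?_
  rw [lagrangeWeight, map_prod, ← prod_mul_distrib, Lagrange.basis]
  refine prod_congr rfl fun i hi => ?_
  have hij : μ j - μ i ≠ 0 := sub_ne_zero.mpr (hμ.ne (ne_of_mem_erase hi).symm)
  have hc : ((μ j)⁻¹ - (μ i)⁻¹)⁻¹ = -(μ j / (μ j - μ i) * μ i) := by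
    field_simp [hμ0 i, hμ0 j]
    rw [← neg_sub (μ j), div_neg, div_self hij]
  have hinv : C (μ i) * C (μ i)⁻¹ = 1 := by rw [← C_mul, mul_inv_cancel₀ (hμ0 i), C_1]
  rw [Lagrange.basisDivisor, hc, map_neg, map_mul]
  linear_combination -C (μ j / (μ j - μ i)) * hinv

theorem sum_lagrangeWeight_mul_prod_erase_one_sub [Nonempty ι] {μ : ι → K}
    (hμ : Function.Injective μ) (hμ0 : ∀ i, μ i ≠ 0) (x : K) :
    ∑ j, lagrangeWeight μ j * ∏ i ∈ univ.erase j, (1 - μ i * x) = 1 := by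
  simpa [eval_finsetSum, eval_prod] using
    congrArg (eval x) (sum_C_lagrangeWeight_mul_prod_erase_one_sub hμ hμ0)

theorem sum_lagrangeWeight [Nonempty ι] {μ : ι → K}
    (hμ : Function.Injective μ) (hμ0 : ∀ i, μ i ≠ 0) : ∑ j, lagrangeWeight μ j = 1 := by
  simpa using sum_lagrangeWeight_mul_prod_erase_one_sub hμ hμ0 0

theorem PowerSeries.mk_pow_mul_one_sub_C_mul_X (c : K) :
    PowerSeries.mk (c ^ ·) * (1 - PowerSeries.C c * PowerSeries.X) = 1 := by
  simpa [PowerSeries.rescale_mk] using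
    congrArg (PowerSeries.rescale c) (PowerSeries.mk_one_mul_one_sub_eq_one K)

theorem sum_lagrangeWeight_mul_pow [Nonempty ι] {μ : ι → K}
    (hμ : Function.Injective μ) (hμ0 : ∀ i, μ i ≠ 0) (m : ℕ) :
    ∑ j, lagrangeWeight μ j * μ j ^ m = PowerSeries.coeff m (∏ i, PowerSeries.mk (μ i ^ ·)) := by
  set g : ι → PowerSeries K := fun i => PowerSeries.mk (μ i ^ ·)
  have hL := congrArg Polynomial.coeToPowerSeries.ringHom
    (sum_C_lagrangeWeight_mul_prod_erase_one_sub hμ hμ0)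
  simp only [map_sum, map_mul, map_prod, map_sub, map_one, coeToPowerSeries.ringHom_apply,
    coe_C, coe_X] at hL
  have hG : ∀ j, (∏ i, g i) * ∏ i ∈ univ.erase j, (1 - PowerSeries.C (μ i) * PowerSeries.X)
      = g j := fun j => by
    rw [← mul_prod_erase univ g (mem_univ j), mul_assoc, ← prod_mul_distrib,
      prod_congr rfl fun i _ => PowerSeries.mk_pow_mul_one_sub_C_mul_X (μ i), prod_const_one,
      mul_one]
  have hsum : ∑ j, PowerSeries.C (lagrangeWeight μ j) * g j = ∏ i, g i := by
    calc ∑ j, PowerSeries.C (lagrangeWeight μ j) * g j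
        = (∏ i, g i) * ∑ j, PowerSeries.C (lagrangeWeight μ j) *
            ∏ i ∈ univ.erase j, (1 - PowerSeries.C (μ i) * PowerSeries.X) := by
          rw [mul_sum]
          refine sum_congr rfl fun j _ => ?_
          rw [mul_left_comm, hG]
      _ = ∏ i, g i := by rw [hL, mul_one]
  simpa [g, map_sum, PowerSeries.coeff_C_mul] using congrArg (PowerSeries.coeff m) hsum

-- The coefficient is `h_m(μ) = ∑_{|l| = m} ∏ᵢ μᵢ^{lᵢ}`; the power sums are its terms with `l` a
-- single point mass, and `m ≥ 2` leaves room for the mixed term `μ_{i₀}^{m-1} μ_{i₁}`.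
theorem sum_pow_lt_coeff_prod_mk_pow {R : Type*} [CommSemiring R] [PartialOrder R]
    [IsStrictOrderedRing R] [Nontrivial ι] {μ : ι → R} (hμ : ∀ i, 0 < μ i) {m : ℕ} (hm : 2 ≤ m) :
    ∑ i, μ i ^ m < PowerSeries.coeff m (∏ i, PowerSeries.mk (μ i ^ ·)) := by
  obtain ⟨i₀, i₁, hne⟩ := exists_pair_ne ι
  simp only [PowerSeries.coeff_prod, PowerSeries.coeff_mk]
  have hpure : ∑ i, μ i ^ m = ∑ l ∈ univ.image (Finsupp.single · m), ∏ i, μ i ^ l i := by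
    rw [sum_image (Finsupp.single_left_injective (by omega)).injOn]
    refine sum_congr rfl fun j _ => ?_
    simp [Finsupp.single_apply, pow_ite]
  set l₀ : ι →₀ ℕ := Finsupp.single i₀ (m - 1) + Finsupp.single i₁ 1
  have hl₀ : l₀ i₁ = 1 := by simp [l₀, hne]
  rw [hpure]
  refine sum_lt_sum_of_subset (i := l₀) ?_ ?_ ?_ ?_ ?_
  · intro l hl
    obtain ⟨j, -, rfl⟩ := mem_image.mp hl
    simp [mem_finsuppAntidiag]
  · simp only [mem_finsuppAntidiag, subset_univ, and_true, l₀, Finsupp.coe_add, Pi.add_apply,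
      sum_add_distrib, Finsupp.single_apply, sum_ite_eq, mem_univ, if_true]
    omega
  · intro hl
    obtain ⟨j, -, hj⟩ := mem_image.mp hl
    have := congrArg (· i₁) hj
    simp only [hl₀, Finsupp.single_apply] at this
    split_ifs at this; omega
  · exact prod_pos fun i _ => pow_pos (hμ i) _
  · exact fun l _ _ => prod_nonneg fun i _ => (pow_pos (hμ i) _).le

theorem sum_lagrangeWeight_mul_sum_erase_pow_neg [LinearOrder K] [IsStrictOrderedRing K]
    [Nontrivial ι] {μ : ι → K}
    (hμ : Function.Injective μ) (hμpos : ∀ i, 0 < μ i) {m : ℕ} (hm : 2 ≤ m) :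
    ∑ j, lagrangeWeight μ j * ∑ i ∈ univ.erase j, μ i ^ m < 0 := by
  have hμ0 : ∀ i, μ i ≠ 0 := fun i => (hμpos i).ne'
  calc ∑ j, lagrangeWeight μ j * ∑ i ∈ univ.erase j, μ i ^ m
      = (∑ j, lagrangeWeight μ j) * ∑ i, μ i ^ m - ∑ j, lagrangeWeight μ j * μ j ^ m := by
        simp only [sum_erase_eq_sub (mem_univ _), mul_sub, sum_sub_distrib, sum_mul]
    _ < 0 := by
      rw [sum_lagrangeWeight hμ hμ0, one_mul, sum_lagrangeWeight_mul_pow hμ hμ0, sub_neg]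
      exact sum_pow_lt_coeff_prod_mk_pow hμpos hm

end Lagrange

section Analytic

variable {𝕜 : Type*} [NontriviallyNormedField 𝕜]

theorem hasFPowerSeriesAt_ofScalars_of_hasSum {c : ℕ → 𝕜} {f : 𝕜 → 𝕜} {r : ℝ} (hr : 0 < r)
    (h : ∀ t, ‖t‖ < r → HasSum (fun m => c m * t ^ m) (f t)) :
    HasFPowerSeriesAt f (FormalMultilinearSeries.ofScalars 𝕜 c) 0 := by
  obtain ⟨t, ht0, htr⟩ := NormedField.exists_norm_lt 𝕜 hr
  refine ⟨‖t‖₊, ?_, by simpa using ht0, fun {y} hy => ?_⟩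
  · refine FormalMultilinearSeries.le_radius_of_tendsto _ (l := 0) ?_
    simpa [FormalMultilinearSeries.ofScalars_norm, norm_mul, norm_pow] using
      (h t htr).summable.tendsto_atTop_zero.norm
  · have hy' : ‖y‖ < r := lt_trans (by simpa using hy) htr
    simpa [FormalMultilinearSeries.ofScalars_apply_eq, mul_comm] using h y hy'

theorem HasFPowerSeriesAt.tendsto_sub_sum_range_div_pow {c : ℕ → 𝕜} {f : 𝕜 → 𝕜}
    (hf : HasFPowerSeriesAt f (FormalMultilinearSeries.ofScalars 𝕜 c) 0) (k : ℕ) :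
    Tendsto (fun t => (f t - ∑ m ∈ range k, c m * t ^ m) / t ^ k) (𝓝[≠] 0) (𝓝 (c k)) := by
  have hO := hf.isBigO_sub_partialSum_pow (k + 1)
  simp only [zero_add, FormalMultilinearSeries.partialSum,
    FormalMultilinearSeries.ofScalars_apply_eq, smul_eq_mul] at hO
  have ho : (fun t => f t - ∑ m ∈ range (k + 1), c m * t ^ m) =o[𝓝 0] fun t => t ^ k :=
    hO.trans_isLittleO
      (by simpa using (isLittleO_pow_pow (𝕜 := 𝕜) (Nat.lt_succ_self k)).norm_left)
  have hlim : Tendsto (fun t => (f t - ∑ m ∈ range (k + 1), c m * t ^ m) / t ^ k + c k)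
      (𝓝[≠] 0) (𝓝 (c k)) := by
    simpa using (ho.tendsto_div_nhds_zero.mono_left nhdsWithin_le_nhds).add_const (c k)
  refine hlim.congr' ?_
  filter_upwards [self_mem_nhdsWithin] with t (ht : t ≠ 0)
  rw [sum_range_succ, ← sub_sub, sub_div, mul_div_cancel_right₀ _ (pow_ne_zero k ht),
    sub_add_cancel]

theorem Filter.Tendsto.comp_mul_div_pow {F : 𝕜 → 𝕜} {L μ : 𝕜} (hμ : μ ≠ 0) {k : ℕ}
    (h : Tendsto (fun s => F s / s ^ k) (𝓝[≠] 0) (𝓝 L)) :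
    Tendsto (fun t => F (μ * t) / t ^ k) (𝓝[≠] 0) (𝓝 (L * μ ^ k)) := by
  have hμt : Tendsto (μ * ·) (𝓝[≠] (0 : 𝕜)) (𝓝[≠] 0) :=
    tendsto_nhdsWithin_of_tendsto_nhds_of_eventually_within _
      (by simpa using ((continuous_const_mul μ).tendsto 0).mono_left nhdsWithin_le_nhds)
      (eventually_nhdsWithin_of_forall fun t ht => mul_ne_zero hμ ht)
  refine ((h.comp hμt).mul_const (μ ^ k)).congr fun t => ?_
  simp only [Function.comp_apply]
  rw [mul_pow, mul_comm (μ ^ k), div_mul_eq_mul_div, mul_div_mul_right _ _ (pow_ne_zero k hμ)]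

end Analytic

theorem Filter.Tendsto.prod_sub_prod_div {α ι 𝕜 : Type*} [Field 𝕜] [TopologicalSpace 𝕜]
    [IsTopologicalRing 𝕜] {l : Filter α} {s : Finset ι} {f g : ι → α → 𝕜} {h : α → 𝕜}
    {c : ι → 𝕜} (hf : ∀ i ∈ s, Tendsto (f i) l (𝓝 1)) (hg : ∀ i ∈ s, Tendsto (g i) l (𝓝 1))
    (hfg : ∀ i ∈ s, Tendsto (fun x => (f i x - g i x) / h x) l (𝓝 (c i))) :
    Tendsto (fun x => (∏ i ∈ s, f i x - ∏ i ∈ s, g i x) / h x) l (𝓝 (∑ i ∈ s, c i)) := by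
  induction s using Finset.cons_induction with
  | empty => simpa using tendsto_const_nhds
  | cons i s hi ih =>
    simp only [forall_mem_cons] at hf hg hfg
    have hlim := (hf.1.mul (ih hf.2 hg.2 hfg.2)).add (hfg.1.mul (tendsto_finsetProd s hg.2))
    rw [one_mul, prod_const_one, mul_one, add_comm, ← sum_cons hi] at hlim
    refine hlim.congr fun x => ?_
    rw [prod_cons, prod_cons]
    ring

theorem mul_sum_lagrangeWeight_mul_sum_erase_pow_eq_zero {ι 𝕜 : Type*} [Fintype ι]
    [DecidableEq ι] [Nonempty ι] [NontriviallyNormedField 𝕜] {μ : ι → 𝕜}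
    (hμ : Function.Injective μ) (hμ0 : ∀ i, μ i ≠ 0)
    {a : ℕ → 𝕜} {ψ : 𝕜 → 𝕜}
    (hψ : HasFPowerSeriesAt ψ (FormalMultilinearSeries.ofScalars 𝕜 a) 0) (ha0 : a 0 = 1)
    (heq : ∀ᶠ t in 𝓝 0, ∑ j, lagrangeWeight μ j * ∏ i ∈ univ.erase j, ψ (μ i * t) = 1)
    {k : ℕ} (hk : 2 ≤ k) (hvanish : ∀ m ∈ Ico 2 k, a m = 0) :
    a k * ∑ j, lagrangeWeight μ j * ∑ i ∈ univ.erase j, μ i ^ k = 0 := by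
  have hpartial : ∀ s, ∑ m ∈ range k, a m * s ^ m = 1 + a 1 * s := fun s => by
    rw [← sum_range_add_sum_Ico _ hk, sum_eq_zero (s := Ico 2 k) fun m hm => by
      rw [hvanish m hm, zero_mul]]
    simp [sum_range_succ, ha0]
  have hfactor : ∀ i, Tendsto (fun t => (ψ (μ i * t) - (1 + a 1 * (μ i * t))) / t ^ k)
      (𝓝[≠] 0) (𝓝 (a k * μ i ^ k)) := fun i => by
    simpa only [hpartial] using (hψ.tendsto_sub_sum_range_div_pow k).comp_mul_div_pow (hμ0 i)
  have hψ1 : ∀ i, Tendsto (fun t => ψ (μ i * t)) (𝓝[≠] 0) (𝓝 1) := fun i => by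
    simpa [ha0] using (hψ.tendsto_sub_sum_range_div_pow 0).comp_mul_div_pow (hμ0 i)
  have haff : ∀ i, Tendsto (fun t => 1 + a 1 * (μ i * t)) (𝓝[≠] (0 : 𝕜)) (𝓝 1) := fun i =>
    tendsto_nhdsWithin_of_tendsto_nhds
      ((by fun_prop : Continuous fun t : 𝕜 => 1 + a 1 * (μ i * t)).tendsto' 0 1 (by simp))
  have hlim := tendsto_finsetSum univ fun j _ =>
    ((Tendsto.prod_sub_prod_div (s := univ.erase j) (fun i _ => hψ1 i) (fun i _ => haff i)
      (fun i _ => hfactor i)).const_mul (lagrangeWeight μ j))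
  have haffsum : ∀ t : 𝕜,
      ∑ j, lagrangeWeight μ j * ∏ i ∈ univ.erase j, (1 + a 1 * (μ i * t)) = 1 := fun t => by
    simpa only [mul_neg, sub_neg_eq_add, mul_left_comm] using
      sum_lagrangeWeight_mul_prod_erase_one_sub hμ hμ0 (-(a 1 * t))
  have hquot : ∀ᶠ t in 𝓝[≠] 0, (0 : 𝕜) = ∑ j, lagrangeWeight μ j *
      ((∏ i ∈ univ.erase j, ψ (μ i * t) - ∏ i ∈ univ.erase j, (1 + a 1 * (μ i * t))) / t ^ k) := by
    filter_upwards [nhdsWithin_le_nhds heq] with t ht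
    simp only [mul_div_assoc', mul_sub, ← sum_div, sum_sub_distrib, ht, haffsum, sub_self,
      zero_div]
  have hzero := tendsto_nhds_unique hlim (tendsto_const_nhds.congr' hquot)
  simpa only [mul_sum, mul_left_comm (a k)] using hzero

theorem functional_equation_forces_affine_general
    (n : ℕ) (hn : 2 ≤ n)
    (μ : Fin n → ℝ) (hμpos : ∀ i, 0 < μ i) (hμanti : StrictAnti μ)
    (a : ℕ → ℝ) (ψ : ℝ → ℝ)
    (r : ℝ) (hr : 0 < r)
    (hψ : ∀ t ∈ Set.Ioo (-r) r, HasSum (fun k => a k * t ^ k) (ψ t))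
    (ha0 : a 0 = 1)
    (ε : ℝ) (hε : 0 < ε)
    (heq : ∀ t ∈ Set.Ioo (-ε) ε,
      (1 : ℝ) = ∑ j, (∏ i ∈ univ.erase j, μ j / (μ j - μ i)) *
        ∏ i ∈ univ.erase j, ψ (μ i * t)) :
    ∀ k, 2 ≤ k → a k = 0 := by
  have : Nontrivial (Fin n) := Fin.nontrivial_iff_two_le.mpr hn
  have hψa : HasFPowerSeriesAt ψ (FormalMultilinearSeries.ofScalars ℝ a) 0 :=
    hasFPowerSeriesAt_ofScalars_of_hasSum hr fun t ht => hψ t (abs_lt.mp ht)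
  have heq' : ∀ᶠ t in 𝓝 0, ∑ j, lagrangeWeight μ j * ∏ i ∈ univ.erase j, ψ (μ i * t) = 1 :=
    eventually_of_mem (Ioo_mem_nhds (neg_neg_of_pos hε) hε) fun t ht => (heq t ht).symm
  intro k
  induction k using Nat.strong_induction_on with
  | _ k ih =>
    intro hk
    have hrelation := mul_sum_lagrangeWeight_mul_sum_erase_pow_eq_zero hμanti.injective
      (fun i => (hμpos i).ne') hψa ha0 heq' hk fun m hm =>
        ih m (mem_Ico.mp hm).2 (mem_Ico.mp hm).1
    exact (mul_eq_zero.mp hrelation).resolve_right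
      (sum_lagrangeWeight_mul_sum_erase_pow_neg hμanti.injective hμpos hk).ne

/-- Key functional-equation step in the proof of Theorem 1. Let `μ₁ > ⋯ > μₙ > 0` (`n ≥ 2`) with
Lagrange weights `ℓⱼ = ∏_{i ≠ j} μⱼ/(μⱼ - μᵢ)`, and let `ψ(t) = ∑_{k=0}^∞ aₖ tᵏ` be a power
series convergent in a neighborhood of `0` with `a₀ = 1` and `a₁ > 0`. If
`1 = ∑_{j=1}^n ℓⱼ ∏_{i ≠ j} ψ(μᵢ t)` for all `t` in a neighborhood of `0`, then `aₖ = 0` for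
all `k ≥ 2`; that is, `ψ(t) = 1 + a₁ t`. -/
theorem functional_equation_forces_affine
    (n : ℕ) (hn : 2 ≤ n)
    (μ : Fin n → ℝ) (hμpos : ∀ i, 0 < μ i) (hμanti : StrictAnti μ)
    (a : ℕ → ℝ) (ψ : ℝ → ℝ)
    (r : ℝ) (hr : 0 < r)
    (hψ : ∀ t ∈ Set.Ioo (-r) r, HasSum (fun k => a k * t ^ k) (ψ t))
    (ha0 : a 0 = 1) (ha1 : 0 < a 1)
    (ε : ℝ) (hε : 0 < ε)
    (heq : ∀ t ∈ Set.Ioo (-ε) ε,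
      (1 : ℝ) = ∑ j, (∏ i ∈ univ.erase j, μ j / (μ j - μ i)) *
        ∏ i ∈ univ.erase j, ψ (μ i * t)) :
    ∀ k, 2 ≤ k → a k = 0 :=
  functional_equation_forces_affine_general n hn μ hμpos hμanti a ψ r hr hψ ha0 ε hε heq
end
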